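/- The two-qubit state ω(π/4) (the Choi state of the selfcomplementary channel at θ = π/4, φ = 0) is separable; equivalently its partial transpose is positive semidefinite and, being a two-qubit state, it is therefore separable (PPT ⟺ separable in 2⊗2). Hence the corresponding channel is entanglement breaking. -/

import Mathlib

/-!
With `|±⟩ = (|0⟩ ± |1⟩)/√2`, one has `ω(π/4) = ½ |++⟩⟨++| + ½ |−−⟩⟨−−|`, a convex combination of
product states, so `ω(π/4)` is separable. Partial transposition sends `ρ ⊗ σ` to `ρᵀ ⊗ σ`, which is
again positive semidefinite, so every separable state has positive partial transpose.
-/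

open Matrix Kronecker
open scoped ComplexOrder

noncomputable section

def idx (i k : Fin 2) : Fin 4 := ⟨2 * i.1 + k.1, by omega⟩

/-- `ω(θ)`: the Choi state of the single-qubit selfcomplementary channel with `φ = 0`. -/
def omg (θ : ℝ) : Matrix (Fin 2 × Fin 2) (Fin 2 × Fin 2) ℂ :=
  Matrix.of fun p q =>
    ((1 / 2 : ℂ) •
      !![(Real.sin θ : ℂ) ^ 2, 0, 0, (((Real.sqrt 2)⁻¹ * Real.sin θ : ℝ) : ℂ);
         0, 1 / 2, (((Real.sqrt 2)⁻¹ * Real.cos θ : ℝ) : ℂ), 0;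
         0, (((Real.sqrt 2)⁻¹ * Real.cos θ : ℝ) : ℂ), (Real.cos θ : ℂ) ^ 2, 0;
         (((Real.sqrt 2)⁻¹ * Real.sin θ : ℝ) : ℂ), 0, 0, 1 / 2])
      (idx p.1 p.2) (idx q.1 q.2)

/-- Partial transpose on the first factor. -/
def ptA (ω : Matrix (Fin 2 × Fin 2) (Fin 2 × Fin 2) ℂ) :
    Matrix (Fin 2 × Fin 2) (Fin 2 × Fin 2) ℂ :=
  Matrix.of fun p q => ω (q.1, p.2) (p.1, q.2)

/-- A two-qubit state is separable if it is a convex combination of tensor products of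
single-qubit states. -/
def SeparableState (ω : Matrix (Fin 2 × Fin 2) (Fin 2 × Fin 2) ℂ) : Prop :=
  ∃ (m : ℕ) (p : Fin m → ℝ) (ρ σ : Fin m → Matrix (Fin 2) (Fin 2) ℂ),
    (∀ i, 0 ≤ p i) ∧ ∑ i, p i = 1 ∧
    (∀ i, (ρ i).PosSemidef ∧ (ρ i).trace = 1) ∧
    (∀ i, (σ i).PosSemidef ∧ (σ i).trace = 1) ∧
    ω = ∑ i, ((p i : ℂ) • ((ρ i) ⊗ₖ (σ i)))

lemma ptA_sum {ι : Type*} (s : Finset ι) (f : ι → Matrix (Fin 2 × Fin 2) (Fin 2 × Fin 2) ℂ) :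
    ptA (∑ i ∈ s, f i) = ∑ i ∈ s, ptA (f i) := by
  ext p q
  simp [ptA, Matrix.sum_apply]

lemma ptA_smul (c : ℂ) (ω : Matrix (Fin 2 × Fin 2) (Fin 2 × Fin 2) ℂ) :
    ptA (c • ω) = c • ptA ω :=
  rfl

lemma ptA_kronecker (ρ σ : Matrix (Fin 2) (Fin 2) ℂ) : ptA (ρ ⊗ₖ σ) = ρᵀ ⊗ₖ σ :=
  rfl

theorem SeparableState.ptA_posSemidef {ω : Matrix (Fin 2 × Fin 2) (Fin 2 × Fin 2) ℂ}
    (hω : SeparableState ω) : (ptA ω).PosSemidef := by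
  obtain ⟨m, p, ρ, σ, hp, -, hρ, hσ, rfl⟩ := hω
  rw [ptA_sum]
  refine posSemidef_sum _ fun i _ => ?_
  rw [ptA_smul, ptA_kronecker]
  exact ((hρ i).1.transpose.kronecker (hσ i).1).smul (Complex.zero_le_real.mpr (hp i))

def IsDensityMatrix {n : Type*} [Fintype n] (ρ : Matrix n n ℂ) : Prop :=
  ρ.PosSemidef ∧ ρ.trace = 1

theorem separableState_of_eq_convex_pair {ρ₁ σ₁ ρ₂ σ₂ : Matrix (Fin 2) (Fin 2) ℂ}
    (hρ₁ : IsDensityMatrix ρ₁) (hσ₁ : IsDensityMatrix σ₁)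
    (hρ₂ : IsDensityMatrix ρ₂) (hσ₂ : IsDensityMatrix σ₂) {t : ℝ} (ht₀ : 0 ≤ t) (ht₁ : t ≤ 1)
    {ω : Matrix (Fin 2 × Fin 2) (Fin 2 × Fin 2) ℂ}
    (hω : ω = t • (ρ₁ ⊗ₖ σ₁) + (1 - t) • (ρ₂ ⊗ₖ σ₂)) :
    SeparableState ω := by
  refine ⟨2, ![t, 1 - t], ![ρ₁, ρ₂], ![σ₁, σ₂], ?_, by simp, ?_, ?_, ?_⟩
  · intro i; fin_cases i <;> simp [ht₀, ht₁]
  · intro i; fin_cases i <;> assumption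
  · intro i; fin_cases i <;> assumption
  · simp [hω, Fin.sum_univ_two, Complex.coe_smul]

/-- `|±⟩⟨±|` for `s = ±1`. -/
def xState (s : ℝ) : Matrix (Fin 2) (Fin 2) ℂ :=
  (2⁻¹ : ℂ) • vecMulVec ![1, (s : ℂ)] (star ![1, (s : ℂ)])

lemma xState_eq (s : ℝ) : xState s = (2⁻¹ : ℂ) • !![1, (s : ℂ); (s : ℂ), (s : ℂ) ^ 2] := by
  ext i j
  fin_cases i <;> fin_cases j <;>
    simp only [xState, Matrix.smul_apply, vecMulVec_apply] <;> simp [sq]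

lemma isDensityMatrix_xState {s : ℝ} (hs : s ^ 2 = 1) : IsDensityMatrix (xState s) := by
  refine ⟨(posSemidef_vecMulVec_self_star _).smul (inv_nonneg.mpr zero_le_two), ?_⟩
  rw [xState_eq, trace_smul, trace_fin_two_of, ← Complex.ofReal_pow, hs]
  norm_num

lemma omg_pi_div_four :
    omg (Real.pi / 4) = (2⁻¹ : ℝ) • (xState 1 ⊗ₖ xState 1) +
      (2⁻¹ : ℝ) • (xState (-1) ⊗ₖ xState (-1)) := by
  have hsq : ((√2 / 2 : ℝ) : ℂ) ^ 2 = 2⁻¹ := by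
    rw [← Complex.ofReal_pow, div_pow, Real.sq_sqrt zero_le_two]; norm_num
  have hmul : (((√2)⁻¹ * (√2 / 2) : ℝ) : ℂ) = 2⁻¹ := by
    rw [inv_mul_eq_div, div_div_cancel_left' (by positivity)]; norm_num
  unfold omg
  rw [Real.sin_pi_div_four, Real.cos_pi_div_four, hsq, hmul]
  ext ⟨i, k⟩ ⟨j, l⟩
  fin_cases i <;> fin_cases k <;> fin_cases j <;> fin_cases l <;>
    simp [idx, xState_eq] <;> norm_num

theorem choi_at_pi_quarter_separable :
    (ptA (omg (Real.pi / 4))).PosSemidef ∧ SeparableState (omg (Real.pi / 4)) := by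
  have hplus : IsDensityMatrix (xState 1) := isDensityMatrix_xState (by norm_num)
  have hminus : IsDensityMatrix (xState (-1)) := isDensityMatrix_xState (by norm_num)
  have hsep : SeparableState (omg (Real.pi / 4)) :=
    separableState_of_eq_convex_pair hplus hplus hminus hminus (t := 2⁻¹) (by norm_num)
      (by norm_num) (by rw [omg_pi_div_four]; norm_num)
  exact ⟨hsep.ptA_posSemidef, hsep⟩

end
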